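/- arXiv:1008.5046 — 2 statements merged into one kernel-verified Lean document; each statement's English description precedes it below -/
import Mathlib

section
/- For every positive integer r, ∑_{k=0}^{r−1} (−1)^k (2π)^{2k} ζ(2r−2k)/(2k+1)! = (−1)^{r−1} (2r−1) (2π)^{2r}/(4·(2r+1)!). -/
/-!
Euler's formula `ζ(2m) = (-1)^(m+1) 2^(2m-1) π^(2m) B_{2m} / (2m)!` turns the `k`-th summand into
a common factor `(-1)^(r-1) (2π)^(2r) / (2 (2r+1)!)` times `C(2r+1, 2r-2k) B_{2r-2k}`. The sum of
the latter over `k < r` is read off the Bernoulli recurrence `∑_{i<2r+1} C(2r+1, i) B_i = 0`: the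
odd-index terms vanish except `i = 1`, so it equals `-(B_0 + (2r+1) B_1) = (2r-1)/2`.
-/

open Real

/-- The Riemann zeta function at natural arguments `s > 1`, as a real series. -/
noncomputable def zetaR (s : ℕ) : ℝ := ∑' n : ℕ, 1 / (n + 1 : ℝ) ^ s

open Finset

theorem zetaR_two_mul {m : ℕ} (hm : m ≠ 0) :
    zetaR (2 * m) = (-1 : ℝ) ^ (m + 1) * 2 ^ (2 * m - 1) * π ^ (2 * m) *
      bernoulli (2 * m) / (2 * m).factorial := by
  have h := hasSum_zeta_nat hm
  rw [← h.tsum_eq, h.summable.tsum_eq_zero_add]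
  simp [zetaR, hm]

theorem sum_range_two_mul_eq_sum_even {M : Type*} [AddCommMonoid M] {f : ℕ → M}
    (hf : ∀ i, Odd i → f i = 0) (n : ℕ) :
    ∑ i ∈ range (2 * n), f i = ∑ j ∈ range n, f (2 * j) := by
  induction n with
  | zero => simp
  | succ n ih =>
    rw [mul_add_one, sum_range_succ, sum_range_succ, ih, sum_range_succ,
      hf _ (odd_two_mul_add_one n), add_zero]

theorem sum_range_choose_mul_bernoulli_even (n : ℕ) :
    ∑ j ∈ range (n + 1), ((2 * n + 3).choose (2 * j + 2) : ℚ) * bernoulli (2 * j + 2)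
      = (2 * n + 1) / 2 := by
  have hrec : ∑ i ∈ range (2 * (n + 1) + 2), ((2 * n + 3).choose i : ℚ) * bernoulli i = 0 := by
    rw [show 2 * (n + 1) + 2 = 2 * n + 3 + 1 by ring, sum_range_succ, sum_bernoulli,
      bernoulli_eq_zero_of_odd (n := 2 * n + 3) ⟨n + 1, by ring⟩ (by omega)]
    simp
  have hodd : ∀ i, Odd i → ((2 * n + 3).choose (i + 2) : ℚ) * bernoulli (i + 2) = 0 := fun i hi ↦
    by rw [bernoulli_eq_zero_of_odd (hi.add_even even_two) (by omega), mul_zero]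
  rw [sum_range_succ', sum_range_succ', sum_range_two_mul_eq_sum_even hodd] at hrec
  simp only [zero_add, Nat.choose_zero_right, Nat.choose_one_right, bernoulli_zero,
    bernoulli_one] at hrec
  push_cast at hrec
  linarith

theorem term_eq_mul_choose_mul_bernoulli {k j n : ℕ} (h : k + j = n) :
    (-1 : ℝ) ^ k * (2 * π) ^ (2 * k) * zetaR (2 * (j + 1)) / (2 * k + 1).factorial
      = (-1 : ℝ) ^ n * (2 * π) ^ (2 * n + 2) / (2 * (2 * n + 3).factorial) *
        (((2 * n + 3).choose (2 * j + 2) : ℝ) * bernoulli (2 * j + 2)) := by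
  subst h
  have hfac : ((2 * (k + j) + 3).factorial : ℝ)
      = (2 * (k + j) + 3).choose (2 * j + 2) * (2 * k + 1).factorial * (2 * j + 2).factorial := by
    rw [show 2 * (k + j) + 3 = 2 * k + 1 + (2 * j + 2) by ring]
    exact_mod_cast (Nat.add_choose_mul_factorial_mul_factorial _ _).symm
  have hchoose : ((2 * (k + j) + 3).choose (2 * j + 2) : ℝ) ≠ 0 := by
    exact_mod_cast (Nat.choose_pos (by omega)).ne'
  rw [zetaR_two_mul (Nat.add_one_ne_zero j), mul_add_one 2 j, hfac, Nat.add_sub_assoc one_le_two]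
  field_simp
  ring

theorem stmt_5 (r : ℕ) (hr : 0 < r) :
    ∑ k ∈ Finset.range r,
        (-1 : ℝ) ^ k * (2 * π) ^ (2 * k) * zetaR (2 * r - 2 * k) / (Nat.factorial (2 * k + 1))
      = (-1 : ℝ) ^ (r - 1) * (2 * r - 1) * (2 * π) ^ (2 * r) /
          (4 * (Nat.factorial (2 * r + 1))) := by
  obtain ⟨n, rfl⟩ := Nat.exists_eq_add_one_of_ne_zero hr.ne'
  have hterm : ∀ k ∈ range (n + 1),
      (-1 : ℝ) ^ k * (2 * π) ^ (2 * k) * zetaR (2 * (n + 1) - 2 * k) / (2 * k + 1).factorial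
        = (-1 : ℝ) ^ n * (2 * π) ^ (2 * n + 2) / (2 * (2 * n + 3).factorial) *
          (((2 * n + 3).choose (2 * (n - k) + 2) : ℝ) * bernoulli (2 * (n - k) + 2)) := by
    intro k hk
    rw [show 2 * (n + 1) - 2 * k = 2 * (n - k + 1) by grind]
    exact term_eq_mul_choose_mul_bernoulli (by grind)
  have hbern := congrArg ((↑) : ℚ → ℝ) (sum_range_choose_mul_bernoulli_even n)
  rw [← sum_range_reflect _ (n + 1), add_tsub_cancel_right] at hbern
  push_cast at hbern
  rw [sum_congr rfl hterm, ← mul_sum, hbern, add_tsub_cancel_right,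
    show 2 * (n + 1) + 1 = 2 * n + 3 by ring]
  push_cast
  field_simp
  ring
end

section
/- For every positive integer r, ∑_{k=0}^{r−1} (−1)^k π^{2k} η(2r−2k)/(2k+1)! = (−1)^{r−1} π^{2r}/(2·(2r+1)!). -/
open Real

/-- The Dirichlet eta function at natural arguments, as a real series. -/
noncomputable def etaR (s : ℕ) : ℝ := ∑' n : ℕ, (-1 : ℝ) ^ n / (n + 1 : ℝ) ^ s

/-!
Setting `η(0) = 1/2`, the identity says that the Cauchy product of the Taylor coefficients
`(-1)^k π^{2k} / (2k+1)!` of `sin (π x) / (π x)` with the sequence `η(2m)` vanishes in every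
positive degree. The Fourier expansion of the Bernoulli polynomials at `x = 1/2` gives
`η(2m) = (-1)^m (2π)^{2m} B_{2m}(1/2) / (2 (2m)!)` for `m ≥ 1`, and `B_0 = 1` matches `η(0) = 1/2`,
so the claim becomes the odd part of the generating function identity
`(∑ B_n(1/2) t^n / n!) · 2 sinh (t/2) = t`.
-/

open PowerSeries Nat Finset

theorem Finset.sum_range_two_mul {M : Type*} [AddCommMonoid M] (f : ℕ → M) (n : ℕ) :
    ∑ i ∈ range (2 * n), f i = ∑ k ∈ range n, (f (2 * k) + f (2 * k + 1)) := by
  induction n with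
  | zero => simp
  | succ n ih => rw [Nat.mul_succ, sum_range_succ, sum_range_succ, sum_range_succ, ih, add_assoc]

theorem pow_two_mul_eq_one_div_four_pow_mul {K : Type*} [Field K] [CharZero K] (x : K) (n : ℕ) :
    x ^ (2 * n) = (1 / 4) ^ n * (2 * x) ^ (2 * n) := by
  rw [mul_pow, pow_mul 2, ← mul_assoc, ← mul_pow]
  norm_num

theorem bernoulli_half_generating_function :
    (mk fun n => bernoulliFun n (1 / 2) / n !) *
      (rescale (1 / 2 : ℝ) (exp ℝ) - rescale (-1 / 2) (exp ℝ)) = X := by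
  have hP : (mk fun n => bernoulliFun n (1 / 2) / n !) =
      mk fun n => Polynomial.aeval (1 / 2 : ℝ) ((1 / n ! : ℚ) • Polynomial.bernoulli n) := by
    ext n
    simp only [coeff_mk, bernoulliFun, map_smul, Polynomial.aeval_def,
      Polynomial.eval₂_eq_eval_map, Rat.smul_def]
    push_cast
    ring
  have hexp : exp ℝ * rescale (-1 / 2) (exp ℝ) = rescale (1 / 2) (exp ℝ) := by
    rw [show (1 / 2 : ℝ) = 1 + -1 / 2 by norm_num, ← exp_mul_exp_eq_exp_add, rescale_one,
      RingHom.id_apply]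
  rw [hP, ← hexp, ← sub_one_mul, ← mul_assoc, Polynomial.bernoulli_generating_function, mul_assoc,
    exp_mul_exp_eq_exp_add]
  norm_num [rescale_zero]

theorem sum_range_div_factorial_mul_bernoulliFun_half {r : ℕ} (hr : r ≠ 0) :
    ∑ k ∈ range (r + 1), (1 / 4 : ℝ) ^ k / (2 * k + 1)! *
      (bernoulliFun (2 * (r - k)) (1 / 2) / (2 * (r - k))!) = 0 := by
  have h := congrArg (coeff (2 * r + 1)) ((mul_comm _ _).trans bernoulli_half_generating_function)
  rw [coeff_mul, Nat.sum_antidiagonal_eq_sum_range_succ_mk,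
    show (2 * r + 1).succ = 2 * (r + 1) by omega, sum_range_two_mul, coeff_X, if_neg (by omega)] at h
  rw [← h]
  refine sum_congr rfl fun k hk => ?_
  have hkr : k ≤ r := Nat.lt_succ_iff.mp (mem_range.mp hk)
  simp only [coeff_mk, map_sub, coeff_rescale, coeff_exp, neg_div,
    show 2 * r + 1 - 2 * k = 2 * (r - k) + 1 by omega,
    show 2 * r + 1 - (2 * k + 1) = 2 * (r - k) by omega]
  rw [Even.neg_pow (even_two_mul k), Odd.neg_pow (odd_two_mul_add_one k), pow_succ, pow_mul]
  push_cast
  ring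

theorem etaR_two_mul {m : ℕ} (hm : m ≠ 0) :
    etaR (2 * m) = (-1) ^ m * (2 * π) ^ (2 * m) / (2 * (2 * m)!) * bernoulliFun (2 * m) (1 / 2) := by
  have h := (hasSum_nat_add_iff' 1).mpr
    (hasSum_one_div_nat_pow_mul_cos hm (x := 1 / 2) ⟨by norm_num, by norm_num⟩)
  have hterm : ∀ n : ℕ, 1 / ((n + 1 : ℕ) : ℝ) ^ (2 * m) * cos (2 * π * (n + 1 : ℕ) * (1 / 2)) =
      -((-1) ^ n / (n + 1 : ℝ) ^ (2 * m)) := by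
    intro n
    rw [show 2 * π * (n + 1 : ℕ) * (1 / 2) = (n + 1 : ℕ) * π by ring, cos_nat_mul_pi]
    push_cast
    ring
  simp only [hterm, sum_range_one, Nat.cast_zero, zero_pow (mul_ne_zero two_ne_zero hm), div_zero,
    zero_mul, sub_zero] at h
  rw [etaR, ← neg_neg (∑' n : ℕ, _), ← tsum_neg, h.tsum_eq, bernoulliFun]
  ring

theorem stmt_6 (r : ℕ) (hr : 0 < r) :
    ∑ k ∈ Finset.range r,
        (-1 : ℝ) ^ k * π ^ (2 * k) * etaR (2 * r - 2 * k) / (Nat.factorial (2 * k + 1))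
      = (-1 : ℝ) ^ (r - 1) * π ^ (2 * r) / (2 * (Nat.factorial (2 * r + 1))) := by
  have hterm : ∀ k ∈ range r, (-1 : ℝ) ^ k * π ^ (2 * k) * etaR (2 * r - 2 * k) / (2 * k + 1)! =
      (-1) ^ r * (2 * π) ^ (2 * r) / 2 *
        ((1 / 4) ^ k / (2 * k + 1)! * (bernoulliFun (2 * (r - k)) (1 / 2) / (2 * (r - k))!)) := by
    intro k hk
    obtain ⟨j, rfl⟩ := Nat.exists_eq_add_of_lt (mem_range.mp hk)
    rw [← Nat.mul_sub, etaR_two_mul (by omega), Nat.add_assoc, Nat.add_sub_cancel_left,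
      pow_two_mul_eq_one_div_four_pow_mul π k]
    field_simp
    ring
  have hsum := sum_range_div_factorial_mul_bernoulliFun_half hr.ne'
  rw [sum_range_succ, Nat.sub_self, mul_zero, bernoulliFun_zero] at hsum
  rw [sum_congr rfl hterm, ← mul_sum, eq_neg_of_add_eq_zero_left hsum,
    pow_two_mul_eq_one_div_four_pow_mul π r]
  obtain ⟨s, rfl⟩ := Nat.exists_eq_add_one_of_ne_zero hr.ne'
  rw [Nat.add_sub_cancel]
  field_simp
  ring
end
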